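/- Let α = α_0 + uα_1 + ⋯ + u^{t−1}α_{t−1} and β = β_0 + uβ_1 + ⋯ + u^{t−1}β_{t−1} ∈ R^t be such that x² + α_{0,0}x + β_{0,0} is irreducible over F, where α_{0,0}, β_{0,0} are the unique elements of F with α_{0,0}^{p^s} = α_0 and β_{0,0}^{p^s} = β_0. Then for all a, b ∈ F not both zero, the image of the polynomial ax + b is invertible in the quotient ring R^t[x]/⟨x^{2p^s} + αx^{p^s} + β⟩. -/

import Mathlib

/-!
Let `f = x^{2p^s} + αx^{p^s} + β`. For `a ≠ 0` write `ax + b = a(x - c)` with `c = -b/a`.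
Since `x - c` divides `f - f(c)`, the class of `x - c` is invertible modulo `f` as soon as
`f(c)` is a unit of `R^t`. In `R^t` the image of `u` is nilpotent, so an element is a unit once
its constant term is; by Frobenius the constant term of `f(c)` is
`(c² + α_{0,0}c + β_{0,0})^{p^s}`, which is nonzero because an irreducible quadratic has no root.
-/

open Polynomial

/-- The finite chain ring `R^t = 𝔽_{p^m}[u]/⟨u^t⟩`. -/
abbrev Rt (p m t : ℕ) [Fact p.Prime] : Type _ :=
  Polynomial (GaloisField p m) ⧸ Ideal.span {(X : Polynomial (GaloisField p m)) ^ t}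

noncomputable instance Rt.instCommRing (p m t : ℕ) [Fact p.Prime] : CommRing (Rt p m t) :=
  Ideal.Quotient.commRing _

/-- The canonical projection `𝔽_{p^m}[u] → R^t`. -/
noncomputable def mkRt (p m t : ℕ) [Fact p.Prime] :
    Polynomial (GaloisField p m) →+* Rt p m t :=
  Ideal.Quotient.mk _

/-- The canonical embedding `𝔽_{p^m} → R^t`. -/
noncomputable def κ (p m t : ℕ) [Fact p.Prime] : GaloisField p m →+* Rt p m t :=
  (mkRt p m t).comp (C : GaloisField p m →+* Polynomial (GaloisField p m))

section QuotientByPolynomial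

variable {R : Type*} [CommRing R]

theorem isUnit_mk_X_sub_C_of_isUnit_eval {f : R[X]} {c : R} (h : IsUnit (f.eval c)) :
    IsUnit (Ideal.Quotient.mk (Ideal.span {f}) (X - C c)) := by
  obtain ⟨q, hq⟩ := X_sub_C_dvd_sub_C_eval (a := c) (p := f)
  have hC : Ideal.Quotient.mk (Ideal.span {f}) (C (f.eval c)) =
      Ideal.Quotient.mk (Ideal.span {f}) (X - C c) * Ideal.Quotient.mk (Ideal.span {f}) (-q) := by
    rw [← map_mul, Ideal.Quotient.eq, mul_neg, ← hq]
    simp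
  exact isUnit_of_mul_isUnit_left (hC ▸ (h.map C).map (Ideal.Quotient.mk _))

theorem isUnit_mk_span_X_pow_of_isUnit_eval_zero {g : R[X]} (t : ℕ) (h : IsUnit (g.eval 0)) :
    IsUnit (Ideal.Quotient.mk (Ideal.span {(X : R[X]) ^ t}) g) := by
  obtain ⟨q, hq⟩ := X_dvd_sub_C (p := g)
  have hX : IsNilpotent (Ideal.Quotient.mk (Ideal.span {(X : R[X]) ^ t}) X) :=
    ⟨t, by rw [← map_pow]; exact Ideal.Quotient.eq_zero_iff_mem.2 (Ideal.mem_span_singleton_self _)⟩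
  have hunit : IsUnit (Ideal.Quotient.mk (Ideal.span {(X : R[X]) ^ t}) (C (g.coeff 0))) :=
    ((coeff_zero_eq_eval_zero g ▸ h).map C).map _
  rw [← add_sub_cancel (C (g.coeff 0)) g, hq, map_add, map_mul]
  exact ((Commute.all _ _).isNilpotent_mul_right hX).isUnit_add_left_of_commute hunit
    (Commute.all _ _)

end QuotientByPolynomial

theorem eval_ne_zero_of_irreducible_quadratic {K : Type*} [Field K] {a b : K}
    (h : Irreducible (X ^ 2 + C a * X + C b)) (y : K) : y ^ 2 + a * y + b ≠ 0 := by
  intro hy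
  have hdeg : (X ^ 2 + C a * X + C b : K[X]).degree = 2 := by compute_degree!
  have hroot := degree_eq_one_of_irreducible_of_root h (x := y) (by simp [hy])
  rw [hdeg] at hroot
  exact absurd hroot (by decide)

theorem isUnit_eval_mk_C_of_isUnit_quadratic {K : Type*} [CommRing K] {p : ℕ} [ExpChar K p]
    (s t : ℕ) {gα gβ : K[X]} {a b y : K} (hα : gα.eval 0 = a ^ p ^ s)
    (hβ : gβ.eval 0 = b ^ p ^ s) (hy : IsUnit (y ^ 2 + a * y + b)) :
    IsUnit (((X : (K[X] ⧸ Ideal.span {(X : K[X]) ^ t})[X]) ^ (2 * p ^ s) +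
      C (Ideal.Quotient.mk _ gα) * X ^ p ^ s + C (Ideal.Quotient.mk _ gβ)).eval
        (Ideal.Quotient.mk _ (C y))) := by
  simp only [eval_add, eval_mul, eval_pow, eval_C, eval_X, ← map_pow, ← map_mul, ← map_add]
  apply isUnit_mk_span_X_pow_of_isUnit_eval_zero
  convert hy.pow (p ^ s) using 1
  simp only [eval_add, eval_mul, eval_C, hα, hβ, add_pow_expChar_pow, mul_pow]
  ring

theorem eval_zero_sum_range_C_mul_X_pow {R : Type*} [Semiring R] {t : ℕ} (ht : 1 ≤ t)
    (c : ℕ → R) : (∑ i ∈ Finset.range t, C (c i) * X ^ i).eval 0 = c 0 := by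
  simp [← coeff_zero_eq_eval_zero, Nat.pos_iff_ne_zero.mp ht]

theorem stmt_4 (p m s t : ℕ) [Fact p.Prime] (ht : 1 ≤ t)
    (αc βc : ℕ → GaloisField p m) (α00 β00 : GaloisField p m)
    (hα00 : α00 ^ p ^ s = αc 0) (hβ00 : β00 ^ p ^ s = βc 0)
    (hirr : Irreducible ((X : Polynomial (GaloisField p m)) ^ 2 + C α00 * X + C β00)) :
    ∀ a b : GaloisField p m, ¬ (a = 0 ∧ b = 0) →
      IsUnit (Ideal.Quotient.mk
        (Ideal.span {((X : Polynomial (Rt p m t)) ^ (2 * p ^ s) +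
          C (mkRt p m t (∑ i ∈ Finset.range t, C (αc i) * X ^ i)) * X ^ p ^ s +
          C (mkRt p m t (∑ i ∈ Finset.range t, C (βc i) * X ^ i)))})
        (C (κ p m t a) * X + C (κ p m t b))) := by
  intro a b hab
  by_cases ha : a = 0
  · have hb : b ≠ 0 := fun hb => hab ⟨ha, hb⟩
    simpa [ha] using ((hb.isUnit.map (κ p m t)).map C).map (Ideal.Quotient.mk _)
  have hfactor : C (κ p m t a) * X + C (κ p m t b) =
      C (κ p m t a) * (X - C (κ p m t (-(b / a)))) := by
    rw [mul_sub, ← C_mul, ← map_mul, mul_neg, mul_div_cancel₀ _ ha, map_neg, C_neg,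
      sub_neg_eq_add]
  have hroot := isUnit_eval_mk_C_of_isUnit_quadratic s t
    ((eval_zero_sum_range_C_mul_X_pow ht αc).trans hα00.symm)
    ((eval_zero_sum_range_C_mul_X_pow ht βc).trans hβ00.symm)
    (eval_ne_zero_of_irreducible_quadratic hirr (-(b / a))).isUnit
  rw [hfactor, map_mul]
  exact ((Ne.isUnit ha |>.map (κ p m t)).map C).map _ |>.mul (isUnit_mk_X_sub_C_of_isUnit_eval hroot)
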